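/- arXiv:1907.01785 — 5 statements merged into one kernel-verified Lean document; each statement's English description precedes it below -/
import Mathlib

section
/- Let c1, c2 ∈ ℝ with c1 ≠ 0, let ε ∈ {−1, 1}, and let θ0 ∈ (0, π). Define θ : ℝ → ℝ by θ(t) = π/2 + arctan(−cot(θ0)·exp(2·c1·t) + ε·c2·(exp(2·c1·t) − 1)/(2·c1)). Then θ is differentiable, θ(0) = θ0, θ(t) ∈ (0, π) for all t ∈ ℝ, and θ'(t) = ε·c2·sin²(θ(t)) − 2·c1·sin(θ(t))·cos(θ(t)) for all t ∈ ℝ. -/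
open Real

/-- For `c1 ≠ 0`, the function
`θ(t) = π/2 + arctan(-cot θ0 · e^{2 c1 t} + ε c2 (e^{2 c1 t} - 1)/(2 c1))`
satisfies `θ(0) = θ0`, stays in `(0, π)`, and solves the contact angle ODE
`θ' = ε c2 sin²θ - 2 c1 sinθ cosθ`. -/
theorem stmt_1 (c1 c2 : ℝ) (hc1 : c1 ≠ 0) (ε : ℝ) (hε : ε = -1 ∨ ε = 1)
    (θ0 : ℝ) (hθ0 : θ0 ∈ Set.Ioo 0 π) (θ : ℝ → ℝ)
    (hθ : θ = fun t : ℝ =>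
      π / 2 + arctan (-Real.cot θ0 * exp (2 * c1 * t) +
        ε * c2 * ((exp (2 * c1 * t) - 1) / (2 * c1)))) :
    θ 0 = θ0 ∧ (∀ t, θ t ∈ Set.Ioo 0 π) ∧
    (∀ t, HasDerivAt θ
      (ε * c2 * sin (θ t) ^ 2 - 2 * c1 * sin (θ t) * cos (θ t)) t) := by
  obtain ⟨h0, hπ⟩ := hθ0
  set v : ℝ → ℝ := fun t => -Real.cot θ0 * exp (2 * c1 * t) +
      ε * c2 * ((exp (2 * c1 * t) - 1) / (2 * c1)) with hv
  have hθv : ∀ t, θ t = π / 2 + arctan (v t) := by intro t; rw [hθ]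
  refine ⟨?_, ?_, ?_⟩
  · have hsin : sin θ0 ≠ 0 := ne_of_gt (Real.sin_pos_of_pos_of_lt_pi h0 hπ)
    have hcot : -Real.cot θ0 = tan (θ0 - π / 2) := by
      rw [Real.cot_eq_cos_div_sin, Real.tan_eq_sin_div_cos, Real.sin_sub_pi_div_two,
        Real.cos_sub_pi_div_two, neg_div]
    have hv0 : v 0 = tan (θ0 - π / 2) := by
      simp [hv, hcot]
    rw [hθv, hv0, Real.arctan_tan (by linarith) (by linarith)]
    ring
  · intro t
    have h := Real.arctan_mem_Ioo (v t)
    obtain ⟨h1, h2⟩ := h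
    have hπ' := Real.pi_pos
    constructor
    · rw [hθv]; linarith
    · rw [hθv]; linarith
  · intro t
    have he : HasDerivAt (fun t : ℝ => exp (2 * c1 * t)) (2 * c1 * exp (2 * c1 * t)) t := by
      have h1 : HasDerivAt (fun t : ℝ => 2 * c1 * t) (2 * c1) t := by
        simpa using (hasDerivAt_id t).const_mul (2 * c1)
      simpa [mul_comm] using h1.exp
    have hder : HasDerivAt v (2 * c1 * v t + ε * c2) t := by
      have h1 : HasDerivAt v (-Real.cot θ0 * (2 * c1 * exp (2 * c1 * t)) +
          ε * c2 * ((2 * c1 * exp (2 * c1 * t)) / (2 * c1))) t :=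
        (he.const_mul _).add (((he.sub_const 1).div_const (2 * c1)).const_mul (ε * c2))
      convert h1 using 1
      simp only [hv]
      field_simp
      ring
    have hθd : HasDerivAt θ (1 / (1 + v t ^ 2) * (2 * c1 * v t + ε * c2)) t := by
      rw [hθ]
      exact (((Real.hasDerivAt_arctan (v t)).comp t hder).const_add (π / 2))
    convert hθd using 1
    have hsq : Real.sqrt (1 + v t ^ 2) ^ 2 = 1 + v t ^ 2 := Real.sq_sqrt (by positivity)
    have hne : Real.sqrt (1 + v t ^ 2) ≠ 0 := by positivity
    have hne2 : (1 : ℝ) + v t ^ 2 ≠ 0 := by positivity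
    rw [hθv t]
    simp only [Real.sin_add, Real.cos_add, Real.sin_pi_div_two, Real.cos_pi_div_two,
      Real.cos_arctan, Real.sin_arctan, one_mul, zero_mul, mul_zero, zero_sub, add_zero, zero_add]
    field_simp
    ring_nf
    rw [hsq]
    ring
end

section
/- Let c1, c2 ∈ ℝ and ε ∈ {−1, 1}, and let θ : ℝ → ℝ be a differentiable function satisfying θ'(t) = ε·c2·sin²(θ(t)) − 2·c1·sin(θ(t))·cos(θ(t)) for all t ∈ ℝ. If θ(0) ∈ (0, π), then θ(t) ∈ (0, π) for all t ∈ ℝ. -/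
open Real

private lemma key_zero (K : NNReal) (F : ℝ → ℝ) (hF : LipschitzWith K F) (θ : ℝ → ℝ)
    (hθ : ∀ t, HasDerivAt θ (F (θ t)) t) (c : ℝ) (hc : F c = 0) (t₀ : ℝ)
    (ht : θ t₀ = c) : θ 0 = c := by
  have hv : ∀ t : ℝ, LipschitzOnWith K (fun x => F x) Set.univ :=
    fun _ => hF.lipschitzOnWith
  have hmem : t₀ ∈ Set.Ioo (min t₀ 0 - 1) (max t₀ 0 + 1) :=
    ⟨by have := min_le_left t₀ 0; linarith, by have := le_max_left t₀ 0; linarith⟩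
  have h := ODE_solution_unique_of_mem_Ioo (v := fun _ x => F x) (s := fun _ => Set.univ)
    (K := K) (fun t _ => hv t) hmem
    (f := θ) (g := fun _ => c)
    (fun t _ => ⟨hθ t, trivial⟩)
    (fun t _ => ⟨by simpa [hc] using hasDerivAt_const t c, trivial⟩)
    ht
  have h0 : (0 : ℝ) ∈ Set.Ioo (min t₀ 0 - 1) (max t₀ 0 + 1) :=
    ⟨by have := min_le_right t₀ 0; linarith, by have := le_max_right t₀ 0; linarith⟩
  exact h h0

/-- The partial wetting regime `θ ∈ (0, π)` is invariant under the contact angle ODE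
`θ' = ε c2 sin²θ - 2 c1 sinθ cosθ`. -/
theorem stmt_3 (c1 c2 ε : ℝ) (hε : ε = -1 ∨ ε = 1) (θ : ℝ → ℝ)
    (hθ : ∀ t, HasDerivAt θ
      (ε * c2 * sin (θ t) ^ 2 - 2 * c1 * sin (θ t) * cos (θ t)) t)
    (h0 : θ 0 ∈ Set.Ioo 0 π) :
    ∀ t, θ t ∈ Set.Ioo 0 π := by
  set F : ℝ → ℝ := fun x => ε * c2 * sin x ^ 2 - 2 * c1 * sin x * cos x with hFdef
  have habs : |ε| = 1 := by rcases hε with h | h <;> simp [h]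
  -- derivative of F
  have hF' : ∀ x, HasDerivAt F (ε * c2 * sin (2 * x) - 2 * c1 * cos (2 * x)) x := by
    intro x
    have h1 := (((hasDerivAt_sin x).pow 2).const_mul (ε * c2)).sub
      ((((hasDerivAt_sin x)).mul (hasDerivAt_cos x)).const_mul (2 * c1))
    have h2 : F = fun x => ε * c2 * sin x ^ 2 - 2 * c1 * (sin x * cos x) := by
      funext y; simp only [hFdef]; ring
    rw [h2]
    refine h1.congr_deriv ?_
    rw [Real.sin_two_mul, Real.cos_two_mul']
    push_cast
    ring
  have hdiff : Differentiable ℝ F := fun x => (hF' x).differentiableAt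
  set K : NNReal := ⟨|c2| + 2 * |c1|, by positivity⟩ with hK
  have hlip : LipschitzWith K F := by
    apply lipschitzWith_of_nnnorm_deriv_le hdiff
    intro x
    rw [← NNReal.coe_le_coe]
    have : deriv F x = ε * c2 * sin (2 * x) - 2 * c1 * cos (2 * x) := (hF' x).deriv
    simp only [coe_nnnorm, Real.norm_eq_abs, this, hK, NNReal.coe_mk]
    calc |ε * c2 * sin (2 * x) - 2 * c1 * cos (2 * x)|
        ≤ |ε * c2 * sin (2 * x)| + |2 * c1 * cos (2 * x)| := abs_sub _ _
      _ ≤ |c2| + 2 * |c1| := by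
          rw [abs_mul, abs_mul, abs_mul, abs_mul, habs]
          have h1 := Real.abs_sin_le_one (2 * x)
          have h2 := Real.abs_cos_le_one (2 * x)
          have h3 : (0:ℝ) ≤ |c2| := abs_nonneg _
          have h4 : (0:ℝ) ≤ |c1| := abs_nonneg _
          have h5 : |(2:ℝ)| = 2 := by norm_num
          rw [h5]
          nlinarith [abs_nonneg (sin (2*x)), abs_nonneg (cos (2*x))]
  have hθ' : ∀ t, HasDerivAt θ (F (θ t)) t := hθ
  have hcont : Continuous θ := by
    rw [continuous_iff_continuousAt]; exact fun t => (hθ' t).continuousAt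
  intro t
  by_contra hmem
  simp only [Set.mem_Ioo, not_and_or, not_lt] at hmem
  rcases hmem with h | h
  · -- θ t ≤ 0 : there is t₀ with θ t₀ = 0
    have : (0 : ℝ) ∈ Set.uIcc (θ t) (θ 0) := Set.mem_uIcc.2 (Or.inl ⟨h, h0.1.le⟩)
    obtain ⟨t₀, _, ht₀⟩ := intermediate_value_uIcc (hcont.continuousOn (s := Set.uIcc t 0)) this
    have := key_zero K F hlip θ hθ' 0 (by simp [hFdef]) t₀ ht₀
    exact absurd this (ne_of_gt h0.1)
  · -- π ≤ θ t : there is t₀ with θ t₀ = π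
    have : π ∈ Set.uIcc (θ 0) (θ t) := Set.mem_uIcc.2 (Or.inl ⟨h0.2.le, h⟩)
    obtain ⟨t₀, _, ht₀⟩ := intermediate_value_uIcc (hcont.continuousOn (s := Set.uIcc 0 t)) this
    have := key_zero K F hlip θ hθ' π (by simp [hFdef]) t₀ ht₀
    exact absurd this (ne_of_lt h0.2)
end

section
/- Let c1, c2 ∈ ℝ, ε ∈ {−1, 1}, and θ0 ∈ (0, π). Suppose f : ℝ → ℝ is differentiable with f'(t) = ε·c2 + 2·c1·f(t) for all t ∈ ℝ and f(0) = −cot(θ0). Then the function θ(t) := π/2 + arctan(f(t)) is differentiable, satisfies θ(0) = θ0, and satisfies θ'(t) = ε·c2·sin²(θ(t)) − 2·c1·sin(θ(t))·cos(θ(t)) for all t ∈ ℝ. -/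
open Real

/-- The ansatz `θ(t) = π/2 + arctan(f(t))` transforms the linear ODE
`f' = ε c2 + 2 c1 f`, `f(0) = -cot θ0` into the contact angle ODE
`θ' = ε c2 sin²θ - 2 c1 sinθ cosθ`, `θ(0) = θ0`. -/
theorem stmt_6 (c1 c2 ε : ℝ) (hε : ε = -1 ∨ ε = 1) (θ0 : ℝ) (hθ0 : θ0 ∈ Set.Ioo 0 π)
    (f : ℝ → ℝ) (hf : ∀ t, HasDerivAt f (ε * c2 + 2 * c1 * f t) t)
    (hf0 : f 0 = -Real.cot θ0) (θ : ℝ → ℝ)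
    (hθ : θ = fun t : ℝ => π / 2 + arctan (f t)) :
    θ 0 = θ0 ∧ ∀ t, HasDerivAt θ
      (ε * c2 * sin (θ t) ^ 2 - 2 * c1 * sin (θ t) * cos (θ t)) t := by
  obtain ⟨h0, hπ⟩ := hθ0
  constructor
  · have htan : Real.tan (θ0 - π / 2) = -Real.cot θ0 := by
      rw [Real.tan_eq_sin_div_cos, Real.cot_eq_cos_div_sin, Real.sin_sub_pi_div_two,
        Real.cos_sub_pi_div_two]
      ring
    have harc : arctan (Real.tan (θ0 - π / 2)) = θ0 - π / 2 :=
      Real.arctan_tan (by linarith) (by linarith)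
    rw [hθ]
    simp only
    rw [hf0, ← htan, harc]
    ring
  · intro t
    have hd := ((hf t).arctan).const_add (π / 2)
    rw [hθ] at *
    refine hd.congr_deriv ?_
    beta_reduce
    set x := f t with hx
    have hpos : (0:ℝ) < 1 + x ^ 2 := by positivity
    have hs : Real.sqrt (1 + x ^ 2) ^ 2 = 1 + x ^ 2 := Real.sq_sqrt hpos.le
    have hsp : (0:ℝ) < Real.sqrt (1 + x ^ 2) := Real.sqrt_pos.mpr hpos
    have hcomm : π / 2 + arctan x = arctan x + π / 2 := by ring
    simp only [hcomm, Real.sin_add_pi_div_two, Real.cos_add_pi_div_two, Real.cos_arctan,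
      Real.sin_arctan]
    rw [div_pow, hs]
    field_simp
    rw [hs]
    ring
end

section
/- Let c1, c2 ∈ ℝ and let A be the real 2×2 matrix with rows (c1, c2) and (0, −c1). Let θ : ℝ → ℝ be differentiable and define n(t) = (sin θ(t), cos θ(t)) ∈ ℝ². Then n satisfies the evolution equation n'(t) = −(Aᵀ·n(t) − ⟨n(t), Aᵀ·n(t)⟩·n(t)) for all t ∈ ℝ if and only if θ'(t) = c2·sin²(θ(t)) − 2·c1·sin(θ(t))·cos(θ(t)) for all t ∈ ℝ. -/
open Real Matrix

/-- In 2D, with `A = [[c1, c2], [0, -c1]]` and `n(t) = (sin θ(t), cos θ(t))`, the normal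
evolution equation `n' = -(Aᵀ n - ⟨n, Aᵀ n⟩ n)` holds iff the contact angle ODE
`θ' = c2 sin²θ - 2 c1 sinθ cosθ` holds. -/
theorem stmt_9 (c1 c2 : ℝ) (θ : ℝ → ℝ) (hθ : Differentiable ℝ θ)
    (n : ℝ → EuclideanSpace ℝ (Fin 2))
    (hn : n = fun t : ℝ =>
      (WithLp.equiv 2 (Fin 2 → ℝ)).symm ![sin (θ t), cos (θ t)]) :
    (∀ t, HasDerivAt n
      (-(Matrix.toEuclideanLin (!![c1, c2; 0, -c1])ᵀ (n t) -
        (inner ℝ (n t) (Matrix.toEuclideanLin (!![c1, c2; 0, -c1])ᵀ (n t)) : ℝ) • n t)) t) ↔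
    (∀ t, deriv θ t = c2 * sin (θ t) ^ 2 - 2 * c1 * sin (θ t) * cos (θ t)) := by
  set k : ℝ → ℝ := fun t => c2 * sin (θ t) ^ 2 - 2 * c1 * sin (θ t) * cos (θ t) with hk
  have hT : (!![c1, c2; 0, -c1])ᵀ = !![c1, 0; c2, -c1] := by
    ext i j; fin_cases i <;> fin_cases j <;> simp
  have hV : ∀ t, (-(Matrix.toEuclideanLin (!![c1, c2; 0, -c1])ᵀ (n t) -
        (inner ℝ (n t) (Matrix.toEuclideanLin (!![c1, c2; 0, -c1])ᵀ (n t)) : ℝ) • n t))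
      = (WithLp.equiv 2 (Fin 2 → ℝ)).symm ![k t * cos (θ t), -(k t * sin (θ t))] := by
    intro t
    rw [hT]
    apply (WithLp.equiv 2 (Fin 2 → ℝ)).injective
    funext i
    have hpy := sin_sq_add_cos_sq (θ t)
    fin_cases i
    · simp [hn, Matrix.toEuclideanLin_apply, PiLp.inner_apply, Matrix.mulVec,
        dotProduct, Fin.sum_univ_two, WithLp.equiv_symm_apply, hk]
      linear_combination (c1 * sin (θ t)) * hpy
    · simp [hn, Matrix.toEuclideanLin_apply, PiLp.inner_apply, Matrix.mulVec,
        dotProduct, Fin.sum_univ_two, WithLp.equiv_symm_apply, hk]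
      linear_combination (c2 * sin (θ t) - c1 * cos (θ t)) * hpy
  have hD : ∀ t, HasDerivAt n
      ((WithLp.equiv 2 (Fin 2 → ℝ)).symm
        ![deriv θ t * cos (θ t), -(deriv θ t * sin (θ t))]) t := by
    intro t
    have hθt := (hθ t).hasDerivAt
    have hf : HasDerivAt (fun t => (![sin (θ t), cos (θ t)] : Fin 2 → ℝ))
        ![deriv θ t * cos (θ t), -(deriv θ t * sin (θ t))] t := by
      rw [hasDerivAt_pi]
      intro i
      fin_cases i
      · exact (by simpa [mul_comm] using hθt.sin : HasDerivAt (fun x => sin (θ x)) (deriv θ t * cos (θ t)) t)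
      · exact (by simpa [mul_comm] using hθt.cos : HasDerivAt (fun x => cos (θ x)) (-(deriv θ t * sin (θ t))) t)
    have hL := ((PiLp.continuousLinearEquiv 2 ℝ (fun _ : Fin 2 => ℝ)).symm.toContinuousLinearMap).hasFDerivAt.comp_hasDerivAt t hf
    rw [hn]
    exact hL
  constructor
  · intro h t
    have heq := (h t).unique (hD t)
    rw [hV t] at heq
    have h0 := congrFun (congrArg (WithLp.equiv 2 (Fin 2 → ℝ)) heq) 0
    have h1 := congrFun (congrArg (WithLp.equiv 2 (Fin 2 → ℝ)) heq) 1
    simp only [hk] at h0 h1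
    simp at h0 h1
    have hpy := sin_sq_add_cos_sq (θ t)
    rcases h0 with h0 | h0
    · linarith
    · rcases h1 with h1 | h1
      · linarith
      · nlinarith
  · intro h t
    rw [hV t]
    have hd := hD t
    rw [h t] at hd
    simpa [hk] using hd
end

section
/- Let c1, c2 ∈ ℝ with c1 ≠ 0, let ε ∈ {−1, 1}, θ0 ∈ (0, π), τ > 0, and set s(t) = (τ/π)·sin(π·t/τ). Define Θ(t) = π/2 + arctan(−cot(θ0)·exp(2·c1·s(t)) + ε·c2·(exp(2·c1·s(t)) − 1)/(2·c1)). Then Θ is differentiable, Θ(0) = θ0, and Θ'(t) = cos(π·t/τ)·(ε·c2·sin²(Θ(t)) − 2·c1·sin(Θ(t))·cos(Θ(t))) for all t ∈ ℝ. -/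
open Real

/-- For the time-dependent linear field, the contact angle
`Θ(t) = π/2 + arctan(-cot θ0 e^{2 c1 s(t)} + ε c2 (e^{2 c1 s(t)} - 1)/(2 c1))` with
`s(t) = (τ/π) sin(π t/τ)` satisfies `Θ(0) = θ0` and the non-autonomous contact angle ODE. -/
theorem stmt_12 (c1 c2 : ℝ) (hc1 : c1 ≠ 0) (ε : ℝ) (hε : ε = -1 ∨ ε = 1)
    (θ0 : ℝ) (hθ0 : θ0 ∈ Set.Ioo 0 π) (τ : ℝ) (hτ : 0 < τ)
    (s : ℝ → ℝ) (hs : s = fun t : ℝ => (τ / π) * sin (π * t / τ))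
    (Θ : ℝ → ℝ)
    (hΘ : Θ = fun t : ℝ =>
      π / 2 + arctan (-Real.cot θ0 * exp (2 * c1 * s t) +
        ε * c2 * ((exp (2 * c1 * s t) - 1) / (2 * c1)))) :
    Θ 0 = θ0 ∧ ∀ t, HasDerivAt Θ
      (cos (π * t / τ) *
        (ε * c2 * sin (Θ t) ^ 2 - 2 * c1 * sin (Θ t) * cos (Θ t))) t := by
  have hπ : (0 : ℝ) < π := pi_pos
  have hτ' : τ ≠ 0 := ne_of_gt hτ
  obtain ⟨hθ0l, hθ0r⟩ := hθ0
  constructor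
  · have hs0 : s 0 = 0 := by rw [hs]; simp
    rw [hΘ]
    simp only [hs0, mul_zero, exp_zero, mul_one, sub_self, zero_div, mul_zero, add_zero]
    have hcot : -Real.cot θ0 = tan (θ0 - π / 2) := by
      rw [Real.cot_eq_cos_div_sin, tan_eq_sin_div_cos, sin_sub_pi_div_two,
        cos_sub_pi_div_two, neg_div]
    rw [hcot, arctan_tan (by linarith) (by linarith)]
    ring
  · intro t
    set u : ℝ := -Real.cot θ0 * exp (2 * c1 * s t) +
        ε * c2 * ((exp (2 * c1 * s t) - 1) / (2 * c1)) with hu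
    have hsd : HasDerivAt s (cos (π * t / τ)) t := by
      rw [hs]
      have h1 : HasDerivAt (fun t : ℝ => π * t / τ) (π / τ) t := by
        simpa using ((hasDerivAt_id t).const_mul π).div_const τ
      have h2 := (h1.sin).const_mul (τ / π)
      refine h2.congr_deriv ?_
      rw [← mul_assoc, mul_comm (τ / π), mul_assoc, div_mul_div_comm, mul_comm π τ,
        div_self (mul_ne_zero hτ' hπ.ne'), mul_one]
    have hEd : HasDerivAt (fun t => exp (2 * c1 * s t))
        (exp (2 * c1 * s t) * (2 * c1 * cos (π * t / τ))) t := by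
      have := ((hsd.const_mul (2 * c1)).exp)
      simpa [mul_comm] using this
    have hud : HasDerivAt (fun t => -Real.cot θ0 * exp (2 * c1 * s t) +
        ε * c2 * ((exp (2 * c1 * s t) - 1) / (2 * c1)))
        (-Real.cot θ0 * (exp (2 * c1 * s t) * (2 * c1 * cos (π * t / τ))) +
          ε * c2 * ((exp (2 * c1 * s t) * (2 * c1 * cos (π * t / τ))) / (2 * c1))) t := by
      exact (hEd.const_mul (-Real.cot θ0)).add
        (((hEd.sub_const 1).div_const (2 * c1)).const_mul (ε * c2))
    have hΘd : HasDerivAt Θ ((1 / (1 + u ^ 2)) *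
        (-Real.cot θ0 * (exp (2 * c1 * s t) * (2 * c1 * cos (π * t / τ))) +
          ε * c2 * ((exp (2 * c1 * s t) * (2 * c1 * cos (π * t / τ))) / (2 * c1)))) t := by
      rw [hΘ]
      refine ((hasDerivAt_const t (π / 2)).add
        ((Real.hasDerivAt_arctan u).comp t hud)).congr_deriv ?_
      ring
    have hΘt : Θ t = π / 2 + arctan u := by rw [hΘ]
    have hsq : (0 : ℝ) < 1 + u ^ 2 := by positivity
    have hsqrt : Real.sqrt (1 + u ^ 2) ^ 2 = 1 + u ^ 2 := Real.sq_sqrt hsq.le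
    have hsqrtpos : (0 : ℝ) < Real.sqrt (1 + u ^ 2) := Real.sqrt_pos.mpr hsq
    have hsinΘ : sin (Θ t) = 1 / Real.sqrt (1 + u ^ 2) := by
      rw [hΘt, sin_add, sin_pi_div_two, cos_pi_div_two, cos_arctan]; ring
    have hcosΘ : cos (Θ t) = -(u / Real.sqrt (1 + u ^ 2)) := by
      rw [hΘt, cos_add, sin_pi_div_two, cos_pi_div_two, sin_arctan]; ring
    have key : exp (2 * c1 * s t) * (ε * c2 - 2 * c1 * Real.cot θ0) =
        ε * c2 + 2 * c1 * u := by
      rw [hu]; field_simp; ring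
    have hD : -Real.cot θ0 * (exp (2 * c1 * s t) * (2 * c1 * cos (π * t / τ))) +
        ε * c2 * ((exp (2 * c1 * s t) * (2 * c1 * cos (π * t / τ))) / (2 * c1)) =
        cos (π * t / τ) * (ε * c2 + 2 * c1 * u) := by
      rw [← key]; field_simp; ring
    rw [hD] at hΘd
    convert hΘd using 1
    rw [hsinΘ, hcosΘ]
    field_simp
    rw [hsqrt]; ring
end
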